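/- Let u(y,t) = (e^{tν ∂_{yy}} v)(y) solve the heat equation on [0,∞) with Dirichlet condition u(0,t) = 0, where v is smooth with v(0) = 0 and v'(y) ≤ 0 for 0 ≤ y ≤ 1. Then for each t > 0, the vorticity ω(y,t) = -∂_y u(y,t) of the shear flow (u(y,t), 0) satisfies ω(y,t) ≥ -C √(ν t) · ‖v''‖_{L^∞} for y in any boundary layer of width o(1), i.e., the negative part of ω + M_ν/ν is controlled for a suitable choice M_ν with ∫_0^T M_ν → 0. -/

import Mathlib

open MeasureTheory Real Set Filter intervalIntegral

lemma aux_integrable_abs {b : ℝ} (hb : 0 < b) :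
    Integrable fun x : ℝ => |x| * Real.exp (-b * x ^ 2) := by
  have := (integrable_mul_exp_neg_mul_sq hb).abs
  refine this.congr (Eventually.of_forall fun x => ?_)
  simp only [abs_mul, abs_of_pos (exp_pos _)]

lemma aux_Ioi_moment {b : ℝ} (hb : 0 < b) :
    ∫ x in Ioi (0:ℝ), x * Real.exp (-b * x ^ 2) = (2 * b)⁻¹ := by
  have A : ∀ x : ℝ, HasDerivAt (fun x : ℝ => -(2 * b)⁻¹ * Real.exp (-b * x ^ 2))
      (x * Real.exp (-b * x ^ 2)) x := by
    intro x
    convert ((hasDerivAt_pow 2 x).const_mul (-b)).exp.const_mul (-(2 * b)⁻¹) using 1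
    · rfl
    · rfl
    field_simp
    ring
  have B : Tendsto (fun y : ℝ => -(2 * b)⁻¹ * Real.exp (-b * y ^ 2)) atTop
      (nhds (-(2 * b)⁻¹ * 0)) := by
    apply Tendsto.const_mul
    apply Real.tendsto_exp_atBot.comp
    have : Tendsto (fun y : ℝ => y ^ 2) atTop atTop := tendsto_pow_atTop (by norm_num)
    exact (this.const_mul_atTop_of_neg (neg_neg_iff_pos.mpr hb) : _)
  have := integral_Ioi_of_hasDerivAt_of_tendsto' (f' := fun x => x * Real.exp (-b * x ^ 2))
    (a := 0) (fun x _ => A x) (integrable_mul_exp_neg_mul_sq hb).integrableOn B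
  rw [this]
  simp

lemma aux_moment {b : ℝ} (hb : 0 < b) :
    ∫ x : ℝ, |x| * Real.exp (-b * x ^ 2) = b⁻¹ := by
  have : ∀ x : ℝ, |x| * Real.exp (-b * x ^ 2) = |x| * Real.exp (-b * |x| ^ 2) := by
    intro x; rw [sq_abs]
  rw [funext this, integral_comp_abs (f := fun x => x * Real.exp (-b * x ^ 2)),
    aux_Ioi_moment hb]
  field_simp

lemma aux_odd_ext_hasDerivAt (v : ℝ → ℝ) (hv : ContDiff ℝ (⊤ : ℕ∞) v) (hv0 : v 0 = 0) (x : ℝ) :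
    HasDerivAt (fun w => if 0 ≤ w then v w else -v (-w)) (deriv v |x|) x := by
  have hdiff : Differentiable ℝ v := hv.differentiable (by simp)
  rcases lt_trichotomy x 0 with hx | hx | hx
  · rw [abs_of_neg hx]
    have h1 : HasDerivAt (fun w : ℝ => -v (-w)) (deriv v (-x)) x := by
      have := ((hdiff (-x)).hasDerivAt.comp x (hasDerivAt_neg x)).neg
      exact this.congr_deriv (by ring)
    refine h1.congr_of_eventuallyEq ?_
    filter_upwards [Iio_mem_nhds hx] with w hw
    rw [if_neg (not_le.mpr hw)]
  · subst hx
    have h0 : |(0:ℝ)| = 0 := abs_zero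
    rw [h0]
    rw [hasDerivAt_iff_tendsto_slope]
    have hs : Tendsto (slope v 0) (nhdsWithin 0 {(0:ℝ)}ᶜ) (nhds (deriv v 0)) :=
      hasDerivAt_iff_tendsto_slope.mp (hdiff 0).hasDerivAt
    have habs : Tendsto (fun w : ℝ => |w|) (nhdsWithin 0 {(0:ℝ)}ᶜ)
        (nhdsWithin 0 {(0:ℝ)}ᶜ) := by
      rw [tendsto_nhdsWithin_iff]
      constructor
      · have := continuous_abs.tendsto (0 : ℝ)
        rw [abs_zero] at this
        exact this.mono_left nhdsWithin_le_nhds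
      · filter_upwards [self_mem_nhdsWithin] with w hw
        simpa using abs_ne_zero.mpr hw
    refine (hs.comp habs).congr' ?_
    filter_upwards [self_mem_nhdsWithin] with w hw
    have hw0 : w ≠ 0 := hw
    simp only [Function.comp_apply, slope_def_field]
    rcases lt_or_ge w 0 with h | h
    · rw [abs_of_neg h]
      simp only [if_neg (not_le.mpr h), if_pos le_rfl, hv0]
      rw [div_eq_div_iff (by linarith) (sub_ne_zero.mpr hw0)]
      ring
    · rw [abs_of_nonneg h, if_pos h, if_pos le_rfl]
  · rw [abs_of_pos hx]
    refine (hdiff x).hasDerivAt.congr_of_eventuallyEq ?_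
    filter_upwards [Ioi_mem_nhds hx] with w hw
    rw [if_pos (le_of_lt hw)]

lemma aux_deriv_le (v : ℝ → ℝ) (hv : ContDiff ℝ (⊤ : ℕ∞) v) (hv0 : v 0 = 0)
    (B K : ℝ) (hK : 0 ≤ K)
    (hbdd : ∀ y : ℝ, 0 ≤ y → |v y| ≤ B ∧ |deriv v y| ≤ B)
    (hv'' : ∀ y : ℝ, 0 ≤ y → |deriv (deriv v) y| ≤ K)
    (hv' : ∀ y ∈ Icc (0:ℝ) 1, deriv v y ≤ 0)
    (ν t : ℝ) (hν : 0 < ν) (ht : 0 < t) (y : ℝ) (hy : y ∈ Icc (0:ℝ) (1/2)) :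
    deriv (fun z => ∫ w : ℝ,
        (Real.sqrt (4 * π * ν * t))⁻¹ * Real.exp (-(z - w) ^ 2 / (4 * ν * t)) *
          (if 0 ≤ w then v w else -v (-w))) y ≤ 2 * Real.sqrt (ν * t) * K := by
  have hπ : (0:ℝ) < π := pi_pos
  set A : ℝ := 4 * ν * t with hA
  have hA0 : 0 < A := by positivity
  have hb0 : 0 < A⁻¹ := by positivity
  have hsq : 0 < Real.sqrt (4 * π * ν * t) := Real.sqrt_pos.mpr (by positivity)
  set c : ℝ := (Real.sqrt (4 * π * ν * t))⁻¹ with hc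
  have hc0 : 0 < c := inv_pos.mpr hsq
  have hπA : 4 * π * ν * t = π * A := by rw [hA]; ring
  set vt : ℝ → ℝ := fun w => if 0 ≤ w then v w else -v (-w) with hvt
  set g : ℝ → ℝ := fun x => deriv v |x| with hg
  set e : ℝ → ℝ := fun s => Real.exp (-A⁻¹ * s ^ 2) with he
  have he_pos : ∀ s, 0 < e s := fun s => exp_pos _
  have hvd : ∀ x, HasDerivAt vt (g x) x := fun x => aux_odd_ext_hasDerivAt v hv hv0 x
  have hB0 : 0 ≤ B := le_trans (abs_nonneg _) (hbdd 0 le_rfl).1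
  have hvt_bdd : ∀ w, |vt w| ≤ B := by
    intro w; by_cases h : 0 ≤ w
    · simpa [hvt, h] using (hbdd w h).1
    · push_neg at h
      simp only [hvt, if_neg (not_le.mpr h), abs_neg]
      exact (hbdd (-w) (by linarith)).1
  have hg_bdd : ∀ x, |g x| ≤ B := fun x => (hbdd |x| (abs_nonneg x)).2
  have hvt_diff : Differentiable ℝ vt := fun x => (hvd x).differentiableAt
  have hvt_cont : Continuous vt := hvt_diff.continuous
  have hvinf : ContDiff ℝ ((⊤ : ℕ∞) : WithTop ℕ∞) v := hv.of_le (by simp)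
  have hdv : ContDiff ℝ ((⊤ : ℕ∞) : WithTop ℕ∞) (deriv v) :=
    (contDiff_infty_iff_deriv.mp hvinf).2
  have hg_cont : Continuous g := hdv.continuous.comp continuous_abs
  have hgLip : ∀ p q : ℝ, |g p - g q| ≤ K * |p - q| := by
    intro p q
    have h1 : ‖deriv v |p| - deriv v |q|‖ ≤ K * ‖|p| - |q|‖ :=
      Convex.norm_image_sub_le_of_norm_deriv_le
        (fun x _ => (hdv.differentiable (by simp) x))
        (fun x hx => by rw [Real.norm_eq_abs]; exact hv'' x hx)
        (convex_Ici 0) (abs_nonneg q) (abs_nonneg p)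
    have h2 : ‖|p| - |q|‖ ≤ |p - q| := by
      rw [Real.norm_eq_abs]; exact abs_abs_sub_abs_le_abs_sub p q
    calc |g p - g q| ≤ K * ‖|p| - |q|‖ := h1
      _ ≤ K * |p - q| := by apply mul_le_mul_of_nonneg_left h2 hK
  -- the integrand as a function of z
  set F : ℝ → ℝ → ℝ := fun z s => c * e s * vt (z + s) with hF
  set F' : ℝ → ℝ → ℝ := fun z s => c * e s * g (z + s) with hF'
  -- translation identity
  have hid : (fun z => ∫ w : ℝ,
      (Real.sqrt (4 * π * ν * t))⁻¹ * Real.exp (-(z - w) ^ 2 / (4 * ν * t)) *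
        (if 0 ≤ w then v w else -v (-w))) = fun z => ∫ s : ℝ, F z s := by
    funext z
    have := MeasureTheory.integral_add_left_eq_self (μ := (volume : Measure ℝ))
      (fun w => c * Real.exp (-(z - w) ^ 2 / (4 * ν * t)) * vt w) z
    rw [← this]
    apply MeasureTheory.integral_congr_ae
    filter_upwards with s
    have harg : -(z - (z + s)) ^ 2 / (4 * ν * t) = -A⁻¹ * s ^ 2 := by
      rw [hA]; field_simp; try ring
    rw [hF]
    simp only []
    rw [he]
    simp only [← harg]
  have hint_e : Integrable e := by
    rw [he]; exact integrable_exp_neg_mul_sq hb0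
  have hint_abse : Integrable (fun s : ℝ => |s| * e s) := by
    rw [he]; exact aux_integrable_abs hb0
  -- differentiation under the integral sign
  have key : Integrable (F' y) volume ∧
      HasDerivAt (fun z => ∫ s, F z s) (∫ s, F' y s) y := by
    apply _root_.hasDerivAt_integral_of_dominated_loc_of_deriv_le (s := Metric.ball y 1) (Metric.ball_mem_nhds y one_pos)
      (bound := fun s => c * e s * B)
    · filter_upwards with x
      exact ((continuous_const.mul (continuous_exp.comp (by fun_prop))).mul
        (hvt_cont.comp (continuous_const.add continuous_id))).aestronglyMeasurable
    · apply Integrable.mono' ((hint_e.const_mul c).mul_const B)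
      · exact ((continuous_const.mul (continuous_exp.comp (by fun_prop))).mul
          (hvt_cont.comp (continuous_const.add continuous_id))).aestronglyMeasurable
      · filter_upwards with s
        rw [Real.norm_eq_abs, hF]
        simp only []
        rw [abs_mul, abs_of_pos (by positivity : (0:ℝ) < c * e s)]
        exact mul_le_mul_of_nonneg_left (hvt_bdd _) (by positivity)
    · exact ((continuous_const.mul (continuous_exp.comp (by fun_prop))).mul
        (hg_cont.comp (continuous_const.add continuous_id))).aestronglyMeasurable
    · filter_upwards with s x _
      rw [Real.norm_eq_abs, hF']
      simp only []
      rw [abs_mul, abs_of_pos (by positivity : (0:ℝ) < c * e s)]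
      exact mul_le_mul_of_nonneg_left (hg_bdd _) (by positivity)
    · exact (hint_e.const_mul c).mul_const B
    · filter_upwards with s x _
      have h1 : HasDerivAt (fun x : ℝ => vt (x + s)) (g (x + s)) x := by
        have := (hvd (x + s)).comp x ((hasDerivAt_id x).add_const s)
        exact this.congr_deriv (by ring)
      have := h1.const_mul (c * e s)
      simpa [hF, hF'] using this
  rw [hid, key.2.deriv]
  -- now bound the integral
  have hmono : ∫ s, F' y s ≤ ∫ s, ((c * g y) * e s + (c * K) * (|s| * e s)) := by
    apply integral_mono key.1
    · exact (hint_e.const_mul (c * g y)).add (hint_abse.const_mul (c * K))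
    · intro s
      have h1 : g (y + s) ≤ g y + K * |s| := by
        have := hgLip (y + s) y
        have h2 : |y + s - y| = |s| := by ring_nf
        rw [h2] at this
        have := le_trans (le_abs_self _) this
        linarith
      have h3 : c * e s * g (y + s) ≤ c * e s * (g y + K * |s|) :=
        mul_le_mul_of_nonneg_left h1 (by positivity)
      calc F' y s ≤ c * e s * (g y + K * |s|) := h3
        _ = (c * g y) * e s + (c * K) * (|s| * e s) := by ring
  have hsplit : ∫ s, ((c * g y) * e s + (c * K) * (|s| * e s))
      = (c * g y) * (∫ s, e s) + (c * K) * (∫ s, |s| * e s) := by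
    rw [integral_add (hint_e.const_mul _) (hint_abse.const_mul _),
      MeasureTheory.integral_const_mul, MeasureTheory.integral_const_mul]
  have hInt1 : ∫ s, e s = Real.sqrt (π * A) := by
    rw [he, integral_gaussian]
    congr 1
    field_simp
  have hInt2 : ∫ s, |s| * e s = A := by
    rw [he, aux_moment hb0, inv_inv]
  have hgy : g y ≤ 0 := by
    rw [hg]
    simp only []
    rw [abs_of_nonneg hy.1]
    exact hv' y ⟨hy.1, by linarith [hy.2]⟩
  have hcA : c * A ≤ Real.sqrt A := by
    rw [hc, hπA]
    have hsq2 : 0 < Real.sqrt (π * A) := Real.sqrt_pos.mpr (by positivity)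
    rw [inv_mul_le_iff₀ hsq2]
    have h1 : Real.sqrt (π * A) = Real.sqrt π * Real.sqrt A :=
      Real.sqrt_mul (le_of_lt hπ) A
    have h2 : Real.sqrt A * Real.sqrt A = A := Real.mul_self_sqrt (le_of_lt hA0)
    have h3 : (1:ℝ) ≤ Real.sqrt π := by
      rw [show (1:ℝ) = Real.sqrt 1 by simp]
      exact Real.sqrt_le_sqrt (by linarith [pi_gt_three])
    calc A = 1 * (Real.sqrt A * Real.sqrt A) := by rw [h2]; ring
      _ ≤ Real.sqrt π * (Real.sqrt A * Real.sqrt A) := by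
          apply mul_le_mul_of_nonneg_right h3 (by positivity)
      _ = Real.sqrt (π * A) * Real.sqrt A := by rw [h1]; ring
  have hsqrtA : Real.sqrt A = 2 * Real.sqrt (ν * t) := by
    rw [hA, show 4 * ν * t = 4 * (ν * t) by ring,
      Real.sqrt_mul (by norm_num : (0:ℝ) ≤ 4),
      show Real.sqrt 4 = 2 by rw [show (4:ℝ) = 2 ^ 2 by norm_num]; exact Real.sqrt_sq (by norm_num)]
  have hterm1 : (c * g y) * Real.sqrt (π * A) ≤ 0 :=
    mul_nonpos_of_nonpos_of_nonneg
      (mul_nonpos_of_nonneg_of_nonpos (le_of_lt hc0) hgy) (Real.sqrt_nonneg _)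
  have hterm2 : (c * K) * A ≤ 2 * Real.sqrt (ν * t) * K := by
    calc (c * K) * A = K * (c * A) := by ring
      _ ≤ K * Real.sqrt A := mul_le_mul_of_nonneg_left hcA hK
      _ = 2 * Real.sqrt (ν * t) * K := by rw [hsqrtA]; ring
  calc ∫ s, F' y s ≤ (c * g y) * (∫ s, e s) + (c * K) * (∫ s, |s| * e s) := by
        rw [← hsplit]; exact hmono
    _ = (c * g y) * Real.sqrt (π * A) + (c * K) * A := by rw [hInt1, hInt2]
    _ ≤ 0 + 2 * Real.sqrt (ν * t) * K := add_le_add hterm1 hterm2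
    _ = 2 * Real.sqrt (ν * t) * K := by ring

/-- The shear flow example: for `u(y,t) = (e^{tν∂_{yy}}v)(y)` given by the heat kernel with
odd reflection, with `v(0)=0`, `v' ≤ 0` on `[0,1]` and bounded derivatives, the vorticity
`ω = -∂_y u` satisfies `ω(y,t) ≥ -C √(νt) ‖v''‖_∞` for `y ∈ [0,1/2]`; consequently for every
`T > 0` there is `M_ν ≥ 0` with `∫₀ᵀ M_ν → 0` as `ν → 0⁺` and `ω + M_ν(t)/ν ≥ 0` there. -/
theorem shear_flow_satisfies_conditions
    (v : ℝ → ℝ) (hv : ContDiff ℝ (⊤ : ℕ∞) v) (hv0 : v 0 = 0)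
    (B K : ℝ) (hK : 0 ≤ K)
    (hbdd : ∀ y : ℝ, 0 ≤ y → |v y| ≤ B ∧ |deriv v y| ≤ B)
    (hv'' : ∀ y : ℝ, 0 ≤ y → |deriv (deriv v) y| ≤ K)
    (hv' : ∀ y ∈ Icc (0:ℝ) 1, deriv v y ≤ 0) :
    ∃ C : ℝ, 0 < C ∧
      (∀ ν t : ℝ, 0 < ν → 0 < t → ∀ y ∈ Icc (0:ℝ) (1/2),
        -(deriv (fun z => ∫ w : ℝ,
            (Real.sqrt (4 * π * ν * t))⁻¹ * Real.exp (-(z - w) ^ 2 / (4 * ν * t)) *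
              (if 0 ≤ w then v w else -v (-w))) y) ≥
          -(C * Real.sqrt (ν * t) * K)) ∧
      (∀ T : ℝ, 0 < T → ∃ M : ℝ → ℝ → ℝ,
        (∀ ν > (0:ℝ), ∀ t ∈ Icc (0:ℝ) T, 0 ≤ M ν t) ∧
        Tendsto (fun ν => ∫ t in (0:ℝ)..T, M ν t) (nhdsWithin 0 (Ioi 0)) (nhds 0) ∧
        (∀ ν > (0:ℝ), ∀ t : ℝ, t ∈ Icc (0:ℝ) T → 0 < t → ∀ y ∈ Icc (0:ℝ) (1/2),
          -(deriv (fun z => ∫ w : ℝ,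
              (Real.sqrt (4 * π * ν * t))⁻¹ * Real.exp (-(z - w) ^ 2 / (4 * ν * t)) *
                (if 0 ≤ w then v w else -v (-w))) y) + M ν t / ν ≥ 0)) := by
  refine ⟨2, by norm_num, ?_, ?_⟩
  · intro ν t hν ht y hy
    have h := aux_deriv_le v hv hv0 B K hK hbdd hv'' hv' ν t hν ht y hy
    linarith
  · intro T hT
    refine ⟨fun ν t => 2 * K * ν * Real.sqrt (ν * T), ?_, ?_, ?_⟩
    · intro ν hν t ht
      have := Real.sqrt_nonneg (ν * T)
      positivity
    · have heq : (fun ν : ℝ => ∫ t in (0:ℝ)..T, 2 * K * ν * Real.sqrt (ν * T))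
          = fun ν : ℝ => T * (2 * K * ν * Real.sqrt (ν * T)) := by
        funext ν
        rw [intervalIntegral.integral_const]
        simp [smul_eq_mul]
      rw [heq]
      have hcont : Continuous fun ν : ℝ => T * (2 * K * ν * Real.sqrt (ν * T)) := by
        fun_prop
      have h0 := hcont.tendsto 0
      have hval : T * (2 * K * 0 * Real.sqrt (0 * T)) = 0 := by ring
      rw [hval] at h0
      exact h0.mono_left nhdsWithin_le_nhds
    · intro ν hν t htT ht y hy
      have h1 := aux_deriv_le v hv hv0 B K hK hbdd hv'' hv' ν t hν ht y hy
      have h2 : Real.sqrt (ν * t) ≤ Real.sqrt (ν * T) :=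
        Real.sqrt_le_sqrt (by nlinarith [htT.2])
      have h3 : 2 * K * ν * Real.sqrt (ν * T) / ν = 2 * K * Real.sqrt (ν * T) := by
        field_simp
      rw [h3]
      have h4 : 2 * Real.sqrt (ν * t) * K ≤ 2 * Real.sqrt (ν * T) * K := by
        nlinarith
      linarith
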